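/- arXiv:1203.0696 — 8 statements merged into one kernel-verified Lean document; each statement's English description precedes it below -/
import Mathlib

section
/- Fix ε ∈ (0, 1/2] with ε ≥ ε_c = 1 − √2/2. Then the rate region Λ_s(ε) equals the set of all pairs (r₁, r₂) with r₁ ≥ 0 and r₂ ≥ 0 satisfying the three inequalities: r₁ + (1−ε)(3−2ε)·r₂ ≤ (1−ε)(3−2ε)/2; r₁ + r₂ ≤ 3/4 − ε/2; (1−ε)(3−2ε)·r₁ + r₂ ≤ (1−ε)(3−2ε)/2. -/
open Finset

/-- State of the symmetric Gilbert–Elliot two-queue model: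
`(m, c₁, c₂)` where `m = true` means the server is at queue 1,
and `cᵢ = true` means channel `i` is ON. -/
abbrev GEState : Type := Bool × Bool × Bool

/-- One-step symmetric channel transition with flip probability `ε`:
the channel keeps its value with probability `1 - ε` and flips it with probability `ε`. -/
noncomputable def chFlip (ε : ℝ) (c c' : Bool) : ℝ := if c = c' then 1 - ε else ε

/-- Transition probability of going to state `s'` from state `s` under action `a`
(`a = true` means "stay", `a = false` means "switch"). -/
noncomputable def GEP (ε : ℝ) (s' s : GEState) (a : Bool) : ℝ :=
  (if s'.1 = (if a then s.1 else !s.1) then (1 : ℝ) else 0) *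
    chFlip ε s.2.1 s'.2.1 * chFlip ε s.2.2 s'.2.2

/-- The state-action polytope `X(ε)`: nonnegative, normalized vectors satisfying the
balance equations. -/
def GEX (ε : ℝ) : Set (GEState × Bool → ℝ) :=
  {x | (∀ sa, 0 ≤ x sa) ∧ (∑ sa : GEState × Bool, x sa) = 1 ∧
    ∀ s : GEState, (∑ a : Bool, x (s, a)) =
      ∑ s' : GEState, ∑ a : Bool, GEP ε s s' a * x (s', a)}

/-- Rate of queue 1: frequency of staying at queue 1 with channel 1 ON. -/
noncomputable def GErate1 (x : GEState × Bool → ℝ) : ℝ :=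
  x ((true, true, true), true) + x ((true, true, false), true)

/-- Rate of queue 2: frequency of staying at queue 2 with channel 2 ON. -/
noncomputable def GErate2 (x : GEState × Bool → ℝ) : ℝ :=
  x ((false, true, true), true) + x ((false, false, true), true)

/-- The rate region `Λ_s(ε)`. -/
def GERateRegion (ε : ℝ) : Set (ℝ × ℝ) :=
  {r | ∃ x ∈ GEX ε, r = (GErate1 x, GErate2 x)}

/-!
Each of the three inequalities bounds an average reward of the MDP and is certified by a potential
`h` on states satisfying the Bellman inequality `R(s, a) + E[h(s') | s, a] ≤ g + h(s)`: summed
against a stationary state-action frequency `x`, the potential telescopes away and leaves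
`∑ R x ≤ g`. Swapping the two queues maps `X(ε)` to itself, so the third inequality is the mirror
image of the first.

Conversely, the rate region is convex and symmetric, and contains the rates `(0, 0)` of always
switching, `(1/2, 0)` of never leaving queue 1, and `A = (3 - 2ε)/(4(2 - ε)) • (1, 1 - ε)` of a
priority policy. The polygon is covered by the triangles `0, (1/2, 0), A` and `0, A, swap A` and the
mirror image of the first.
-/

def swapQueues (s : GEState) : GEState := (!s.1, s.2.2, s.2.1)

theorem swapQueues_involutive : Function.Involutive swapQueues := by
  rintro ⟨m, c₁, c₂⟩
  simp [swapQueues]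

theorem GEP_swapQueues (ε : ℝ) (s' s : GEState) (a : Bool) :
    GEP ε (swapQueues s') (swapQueues s) a = GEP ε s' s a := by
  obtain ⟨m', c₁', c₂'⟩ := s'
  obtain ⟨m, c₁, c₂⟩ := s
  cases a <;> simp [GEP, swapQueues, mul_comm (chFlip ε c₂ c₂')]

theorem sum_swapQueues {M : Type*} [AddCommMonoid M] (f : GEState → M) :
    ∑ s, f (swapQueues s) = ∑ s, f s :=
  Equiv.sum_comp swapQueues_involutive.toPerm f

theorem swapQueues_mem_GEX {ε : ℝ} {x : GEState × Bool → ℝ} (hx : x ∈ GEX ε) :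
    (fun sa => x (swapQueues sa.1, sa.2)) ∈ GEX ε := by
  obtain ⟨hpos, hsum, hbal⟩ := hx
  refine ⟨fun sa => hpos _, ?_, fun s => ?_⟩
  · rw [Fintype.sum_prod_type] at hsum ⊢
    rwa [sum_swapQueues (fun s => ∑ a, x (s, a))]
  · dsimp only
    rw [hbal, ← sum_swapQueues]
    simp only [GEP_swapQueues]

theorem swap_mem_GERateRegion {ε : ℝ} {r : ℝ × ℝ} (hr : r ∈ GERateRegion ε) :
    r.swap ∈ GERateRegion ε := by
  obtain ⟨x, hx, rfl⟩ := hr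
  exact ⟨_, swapQueues_mem_GEX hx, by simp [GErate1, GErate2, swapQueues, add_comm]⟩

theorem convex_GEX (ε : ℝ) : Convex ℝ (GEX ε) := by
  rintro x ⟨hxpos, hxsum, hxbal⟩ y ⟨hypos, hysum, hybal⟩ a b ha hb hab
  refine ⟨fun sa => ?_, ?_, fun s => ?_⟩
  · simp only [Pi.add_apply, Pi.smul_apply, smul_eq_mul]
    have := hxpos sa
    have := hypos sa
    positivity
  · simp [sum_add_distrib, ← mul_sum, hxsum, hysum, hab]
  · simp only [Pi.add_apply, Pi.smul_apply, smul_eq_mul, mul_add, sum_add_distrib,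
      mul_left_comm _ a, mul_left_comm _ b, ← mul_sum, hxbal, hybal]

theorem convex_GERateRegion (ε : ℝ) : Convex ℝ (GERateRegion ε) := by
  rintro _ ⟨x, hx, rfl⟩ _ ⟨y, hy, rfl⟩ a b ha hb hab
  refine ⟨a • x + b • y, convex_GEX ε hx hy ha hb hab, ?_⟩
  simp only [GErate1, GErate2, Pi.add_apply, Pi.smul_apply, smul_eq_mul, Prod.smul_mk,
    Prod.mk_add_mk]
  congr 1 <;> ring

theorem sum_mul_expected_potential_eq {ε : ℝ} {x : GEState × Bool → ℝ} (hx : x ∈ GEX ε)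
    (h : GEState → ℝ) :
    ∑ sa, x sa * ∑ s', GEP ε s' sa.1 sa.2 * h s' = ∑ sa, x sa * h sa.1 := by
  symm
  calc ∑ sa, x sa * h sa.1 = ∑ s, h s * ∑ a, x (s, a) := by
        rw [Fintype.sum_prod_type]
        simp only [mul_sum, mul_comm]
    _ = ∑ s, h s * ∑ s', ∑ a, GEP ε s s' a * x (s', a) := by simp only [hx.2.2]
    _ = ∑ s', ∑ a, x (s', a) * ∑ s, GEP ε s s' a * h s := by
        simp only [mul_sum]
        rw [sum_comm]
        refine sum_congr rfl fun s' _ => ?_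
        rw [sum_comm]
        exact sum_congr rfl fun a _ => sum_congr rfl fun s _ => by ring
    _ = _ := (Fintype.sum_prod_type (fun sa => x sa * ∑ s, GEP ε s sa.1 sa.2 * h s)).symm

theorem sum_mul_le_of_potential {ε : ℝ} {x : GEState × Bool → ℝ} (hx : x ∈ GEX ε)
    (R : GEState × Bool → ℝ) (g : ℝ) (h : GEState → ℝ)
    (hR : ∀ sa, R sa + ∑ s', GEP ε s' sa.1 sa.2 * h s' ≤ g + h sa.1) :
    ∑ sa, R sa * x sa ≤ g := by
  have hbound : ∑ sa, R sa * x sa ≤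
      ∑ sa, x sa * (g + h sa.1 - ∑ s', GEP ε s' sa.1 sa.2 * h s') :=
    sum_le_sum fun sa _ => by nlinarith [hR sa, hx.1 sa]
  simpa [mul_sub, mul_add, sum_add_distrib, sum_sub_distrib, ← sum_mul, hx.2.1,
    sum_mul_expected_potential_eq hx] using hbound

def rateReward (w₁ w₂ : ℝ) : GEState × Bool → ℝ
  | ((true, true, _), true) => w₁
  | ((false, _, true), true) => w₂
  | _ => 0

theorem sum_rateReward_mul (w₁ w₂ : ℝ) (x : GEState × Bool → ℝ) :
    ∑ sa, rateReward w₁ w₂ sa * x sa = w₁ * GErate1 x + w₂ * GErate2 x := by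
  simp [Fintype.sum_prod_type, rateReward, GErate1, GErate2]
  ring

theorem weighted_rate_le_of_potential {ε : ℝ} {x : GEState × Bool → ℝ} (hx : x ∈ GEX ε)
    (w₁ w₂ g : ℝ) (h : GEState → ℝ)
    (hR : ∀ s a, rateReward w₁ w₂ (s, a) + ∑ s', GEP ε s' s a * h s' ≤ g + h s) :
    w₁ * GErate1 x + w₂ * GErate2 x ≤ g := by
  rw [← sum_rateReward_mul]
  exact sum_mul_le_of_potential hx _ g h fun sa => hR sa.1 sa.2

theorem rate_add_le {ε : ℝ} (hε₀ : 0 < ε) (hε : ε ≤ 1 / 2) {x : GEState × Bool → ℝ}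
    (hx : x ∈ GEX ε) : GErate1 x + GErate2 x ≤ 3 / 4 - ε / 2 := by
  have h12 : 0 ≤ 1 - 2 * ε := by linarith
  have hpot := weighted_rate_le_of_potential hx (8 * ε * (1 - ε)) (8 * ε * (1 - ε))
    (2 * ε * (1 - ε) * (3 - 2 * ε))
    (fun | (true, true, true) => 4 - 4 * ε | (true, true, false) => 3 - 4 * ε ^ 2
         | (true, false, true) => 3 - 8 * ε + 4 * ε ^ 2 | (false, true, true) => 4 - 4 * ε
         | (false, true, false) => 3 - 8 * ε + 4 * ε ^ 2 | (false, false, true) => 3 - 4 * ε ^ 2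
         | _ => 0) (by
      rintro ⟨_ | _, _ | _, _ | _⟩ (_ | _) <;>
        simp [rateReward, GEP, chFlip, Fintype.sum_prod_type] <;>
        nlinarith [mul_pos hε₀ hε₀, mul_nonneg (sq_nonneg ε) h12])
  refine le_of_mul_le_mul_left ?_ (by nlinarith : 0 < 8 * ε * (1 - ε))
  linarith

theorem rate1_add_mul_rate2_le {ε : ℝ} (hε₀ : 0 < ε) (hε : ε ≤ 1 / 2)
    (hc : 2 * (1 - ε) ^ 2 ≤ 1) {x : GEState × Bool → ℝ} (hx : x ∈ GEX ε) :
    GErate1 x + (1 - ε) * (3 - 2 * ε) * GErate2 x ≤ (1 - ε) * (3 - 2 * ε) / 2 := by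
  have h12 : 0 ≤ 1 - 2 * ε := by linarith
  set β := (1 - ε) * (3 - 2 * ε) with hβ
  -- The slack at `((1, on, on), switch)` is `2 * (1 - 2 * (1 - ε) ^ 2)`:
  -- this is where `ε ≥ ε_c` enters.
  have hpot := weighted_rate_le_of_potential hx (2 * ε) (2 * ε * β) (ε * β)
    (fun | (true, true, true) => 1 - 3 * ε + 8 * ε ^ 2 - 4 * ε ^ 3 | (true, true, false) => 2 * ε
         | (true, false, true) => β * (1 - 2 * ε) | (false, true, true) => β
         | (false, false, true) => β | _ => 0) (by
      rintro ⟨_ | _, _ | _, _ | _⟩ (_ | _) <;>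
        simp [rateReward, GEP, chFlip, Fintype.sum_prod_type, hβ] <;>
        nlinarith [mul_pos hε₀ hε₀, mul_nonneg (sq_nonneg ε) h12])
  refine le_of_mul_le_mul_left ?_ (by positivity : 0 < 2 * ε)
  linarith

theorem mul_rate1_add_rate2_le {ε : ℝ} (hε₀ : 0 < ε) (hε : ε ≤ 1 / 2)
    (hc : 2 * (1 - ε) ^ 2 ≤ 1) {x : GEState × Bool → ℝ} (hx : x ∈ GEX ε) :
    (1 - ε) * (3 - 2 * ε) * GErate1 x + GErate2 x ≤ (1 - ε) * (3 - 2 * ε) / 2 := by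
  have h := rate1_add_mul_rate2_le hε₀ hε hc (swapQueues_mem_GEX hx)
  simp only [GErate1, GErate2, swapQueues, Bool.not_true, Bool.not_false] at h ⊢
  linarith

theorem two_mul_one_sub_sq_le_one {ε : ℝ} (hε : ε ≤ 1) (hc : 1 - Real.sqrt 2 / 2 ≤ ε) :
    2 * (1 - ε) ^ 2 ≤ 1 := by
  have h := pow_le_pow_left₀ (sub_nonneg.2 hε) (show 1 - ε ≤ Real.sqrt 2 / 2 by linarith) 2
  rw [div_pow, Real.sq_sqrt zero_le_two] at h
  linarith

theorem mem_GERateRegion_of_balanced {ε c : ℝ} (w : GEState × Bool → ℝ) (hw : ∀ sa, 0 ≤ w sa)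
    (hsum : ∑ sa, w sa = c) (hc : 0 < c)
    (hbal : ∀ s, ∑ a, w (s, a) = ∑ s', ∑ a, GEP ε s s' a * w (s', a)) :
    (GErate1 w / c, GErate2 w / c) ∈ GERateRegion ε := by
  refine ⟨c⁻¹ • w, ⟨fun sa => ?_, ?_, fun s => ?_⟩, ?_⟩
  · exact mul_nonneg (inv_nonneg.2 hc.le) (hw sa)
  · simp [← mul_sum, hsum, hc.ne']
  · simp only [Pi.smul_apply, smul_eq_mul, mul_left_comm _ c⁻¹, ← mul_sum, hbal]
  · simp [GErate1, GErate2, div_eq_inv_mul, mul_add]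

def alwaysSwitchFreq : GEState × Bool → ℝ := fun sa => if sa.2 then 0 else 1

def stayAtFirstFreq : GEState × Bool → ℝ := fun sa => if sa.2 && sa.1.1 then 1 else 0

/-- Stationary state-action frequencies (scaled by `4 * (2 - ε)`) of the policy that stays while
its own channel is ON, otherwise moves to the other queue if that channel is ON, and otherwise
rests at queue 1. -/
def priorityFreq (ε : ℝ) : GEState × Bool → ℝ
  | ((true, true, true), true) => 1
  | ((true, true, false), true) => 2 * (1 - ε)
  | ((true, false, false), true) => 2 - 3 * ε + 2 * ε ^ 2
  | ((true, false, true), false) => ε * (3 - 2 * ε)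
  | ((false, true, true), true) => 1 - ε
  | ((false, false, true), true) => 2 * (1 - ε) ^ 2
  | ((false, true, false), false) => ε
  | ((false, false, false), false) => 2 * ε * (1 - ε)
  | _ => 0

theorem zero_mem_GERateRegion (ε : ℝ) : ((0 : ℝ), (0 : ℝ)) ∈ GERateRegion ε := by
  have h := mem_GERateRegion_of_balanced (ε := ε) alwaysSwitchFreq
    (fun sa => by unfold alwaysSwitchFreq; split_ifs <;> norm_num)
    (by simp [alwaysSwitchFreq, Fintype.sum_prod_type]) (by norm_num : (0 : ℝ) < 8)
    (by
      rintro ⟨_ | _, _ | _, _ | _⟩ <;>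
        simp [alwaysSwitchFreq, GEP, chFlip, Fintype.sum_prod_type] <;> ring)
  simpa [GErate1, GErate2, alwaysSwitchFreq] using h

theorem half_zero_mem_GERateRegion (ε : ℝ) : ((1 / 2 : ℝ), (0 : ℝ)) ∈ GERateRegion ε := by
  have h := mem_GERateRegion_of_balanced (ε := ε) stayAtFirstFreq
    (fun sa => by unfold stayAtFirstFreq; split_ifs <;> norm_num)
    (by simp only [Fintype.sum_prod_type, Fintype.sum_bool, stayAtFirstFreq]; norm_num)
    (by norm_num : (0 : ℝ) < 4)
    (by
      rintro ⟨_ | _, _ | _, _ | _⟩ <;>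
        simp [stayAtFirstFreq, GEP, chFlip, Fintype.sum_prod_type] <;> ring)
  convert h using 2 <;> norm_num [GErate1, GErate2, stayAtFirstFreq]

theorem priority_rates_mem_GERateRegion {ε : ℝ} (hε₀ : 0 ≤ ε) (hε : ε ≤ 1) :
    ((3 - 2 * ε) / (4 * (2 - ε)), (1 - ε) * (3 - 2 * ε) / (4 * (2 - ε))) ∈ GERateRegion ε := by
  have h := mem_GERateRegion_of_balanced (ε := ε) (priorityFreq ε)
    (by rintro ⟨⟨_ | _, _ | _, _ | _⟩, _ | _⟩ <;> simp [priorityFreq] <;> nlinarith)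
    (by simp [priorityFreq, Fintype.sum_prod_type]; ring) (by linarith : 0 < 4 * (2 - ε))
    (by
      rintro ⟨_ | _, _ | _, _ | _⟩ <;>
        simp [priorityFreq, GEP, chFlip, Fintype.sum_prod_type] <;> ring)
  convert h using 3 <;> simp [GErate1, GErate2, priorityFreq] <;> ring

theorem add_smul_mem_of_zero_mem {E : Type*} [AddCommGroup E] [Module ℝ E] {s : Set E}
    (hs : Convex ℝ s) (h0 : 0 ∈ s) {p q : E} (hp : p ∈ s) (hq : q ∈ s) {a b : ℝ}
    (ha : 0 ≤ a) (hb : 0 ≤ b) (hab : a + b ≤ 1) : a • p + b • q ∈ s := by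
  rcases (add_nonneg ha hb).eq_or_lt with h | h
  · obtain ⟨rfl, rfl⟩ : a = 0 ∧ b = 0 := ⟨by linarith, by linarith⟩
    simpa using h0
  · have hpq := hs hp hq (div_nonneg ha h.le) (div_nonneg hb h.le) (by field_simp)
    convert hs.smul_mem_of_zero_mem h0 hpq ⟨h.le, hab⟩ using 1
    simp only [smul_add, smul_smul, mul_div_cancel₀ _ h.ne']

theorem mem_GERateRegion_of_le_one_sub_mul {ε r₁ r₂ : ℝ} (hε₀ : 0 ≤ ε) (hε : ε < 1)
    (h₂ : 0 ≤ r₂) (h₂₁ : r₂ ≤ (1 - ε) * r₁)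
    (h : (1 - ε) * (3 - 2 * ε) * r₁ + r₂ ≤ (1 - ε) * (3 - 2 * ε) / 2) :
    (r₁, r₂) ∈ GERateRegion ε := by
  have h1 : 0 < 1 - ε := by linarith
  have h2 : 0 < 2 - ε := by linarith
  have h3 : 0 < 3 - 2 * ε := by linarith
  set a := 2 * (r₁ - r₂ / (1 - ε)) with ha
  set b := 4 * (2 - ε) * r₂ / ((1 - ε) * (3 - 2 * ε)) with hb
  have hab : 1 - (a + b) =
      2 * ((1 - ε) * (3 - 2 * ε) / 2 - ((1 - ε) * (3 - 2 * ε) * r₁ + r₂)) /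
        ((1 - ε) * (3 - 2 * ε)) := by
    rw [ha, hb]
    field_simp
    ring
  have hmem := add_smul_mem_of_zero_mem (convex_GERateRegion ε) (zero_mem_GERateRegion ε)
    (half_zero_mem_GERateRegion ε) (priority_rates_mem_GERateRegion hε₀ hε.le) (a := a) (b := b)
    (by rw [ha, mul_nonneg_iff_of_pos_left two_pos, sub_nonneg, div_le_iff₀ h1]; linarith)
    (by positivity) (sub_nonneg.1 (by rw [hab]; apply div_nonneg <;> nlinarith))
  convert hmem using 1
  ext <;> simp only [Prod.fst_add, Prod.snd_add, Prod.smul_mk, smul_eq_mul, ha, hb] <;>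
    field_simp <;> ring

theorem mem_GERateRegion_of_one_sub_mul_le {ε r₁ r₂ : ℝ} (hε₀ : 0 < ε) (hε : ε ≤ 1)
    (h₁₂ : (1 - ε) * r₁ ≤ r₂) (h₂₁ : (1 - ε) * r₂ ≤ r₁) (h : r₁ + r₂ ≤ 3 / 4 - ε / 2) :
    (r₁, r₂) ∈ GERateRegion ε := by
  have h2 : 0 < 2 - ε := by linarith
  have h3 : 0 < 3 - 2 * ε := by linarith
  have hA := priority_rates_mem_GERateRegion hε₀.le hε
  set a := 4 * (r₁ - (1 - ε) * r₂) / (ε * (3 - 2 * ε)) with ha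
  set b := 4 * (r₂ - (1 - ε) * r₁) / (ε * (3 - 2 * ε)) with hb
  have hab : a + b ≤ 1 := by
    rw [ha, hb, ← add_div, div_le_one (by positivity)]
    nlinarith [mul_le_mul_of_nonneg_left h hε₀.le]
  have hmem := add_smul_mem_of_zero_mem (convex_GERateRegion ε) (zero_mem_GERateRegion ε)
    hA (swap_mem_GERateRegion hA) (div_nonneg (by linarith) (by positivity))
    (div_nonneg (by linarith) (by positivity)) hab
  convert hmem using 1
  ext <;> simp only [Prod.fst_add, Prod.snd_add, Prod.smul_fst, Prod.smul_snd, Prod.fst_swap,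
    Prod.snd_swap, smul_eq_mul] <;>
    rw [div_mul_div_comm, div_mul_div_comm, ← add_div, eq_div_iff (by positivity)] <;> ring

/-- For `ε ∈ (0, 1/2]` with `ε ≥ ε_c = 1 - √2/2`, the rate region `Λ_s(ε)` is the set of
nonnegative pairs `(r₁, r₂)` satisfying the three stated inequalities. -/
theorem rate_region_eq_of_ge_critical (ε : ℝ) (hε : ε ∈ Set.Ioc (0 : ℝ) (1 / 2))
    (hc : 1 - Real.sqrt 2 / 2 ≤ ε) :
    GERateRegion ε =
      {r : ℝ × ℝ | 0 ≤ r.1 ∧ 0 ≤ r.2 ∧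
        r.1 + (1 - ε) * (3 - 2 * ε) * r.2 ≤ (1 - ε) * (3 - 2 * ε) / 2 ∧
        r.1 + r.2 ≤ 3 / 4 - ε / 2 ∧
        (1 - ε) * (3 - 2 * ε) * r.1 + r.2 ≤ (1 - ε) * (3 - 2 * ε) / 2} := by
  obtain ⟨hε₀, hε⟩ := hε
  have hc' := two_mul_one_sub_sq_le_one (by linarith) hc
  apply Set.Subset.antisymm
  · rintro _ ⟨x, hx, rfl⟩
    exact ⟨add_nonneg (hx.1 _) (hx.1 _), add_nonneg (hx.1 _) (hx.1 _),
      rate1_add_mul_rate2_le hε₀ hε hc' hx, rate_add_le hε₀ hε hx,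
      mul_rate1_add_rate2_le hε₀ hε hc' hx⟩
  · rintro ⟨r₁, r₂⟩ ⟨h₁, h₂, h₁₂, hsum, h₂₁⟩
    rcases le_or_gt r₂ ((1 - ε) * r₁) with h | h
    · exact mem_GERateRegion_of_le_one_sub_mul hε₀.le (by linarith) h₂ h h₂₁
    rcases le_or_gt r₁ ((1 - ε) * r₂) with h' | h'
    · exact swap_mem_GERateRegion
        (mem_GERateRegion_of_le_one_sub_mul hε₀.le (by linarith) h₁ h' (by linarith))
    · exact mem_GERateRegion_of_one_sub_mul_le hε₀ (by linarith) h.le h'.le hsum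
end

section
/- For every ε ∈ (0, 1/2], the maximum of r₁(x) + r₂(x) over all x in the state-action polytope X(ε) equals 3/4 − ε/2; that is, every x ∈ X(ε) satisfies r₁(x) + r₂(x) ≤ 3/4 − ε/2, and there exists x ∈ X(ε) attaining equality. -/
/-!
The bound is linear-programming duality. Six of the balance equations together with the
normalisation, weighted by an optimal dual solution, show that on `X(ε)` the sum rate equals
`3/4 - ε/2` minus a nonnegative combination of six "wasteful" state-action frequencies:
switching away from an ON channel, and staying at an OFF channel while the other one is ON.
The policy that stays exactly when its channel is ON or both channels are OFF never takes a
wasteful action, so its stationary frequency vector attains the bound.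
-/

open Finset

/-- The reduced costs of the dual certificate: the rate lost, per unit of frequency, on each
wasteful state-action pair. -/
noncomputable def sumRateDeficit (ε : ℝ) (x : GEState × Bool → ℝ) : ℝ :=
  x ((true, true, true), false) + 2 * (1 - ε) * x ((true, true, false), false) +
    (1 - 2 * ε) * x ((true, false, true), true) +
  x ((false, true, true), false) + 2 * (1 - ε) * x ((false, false, true), false) +
    (1 - 2 * ε) * x ((false, true, false), true)

theorem sumRateDeficit_nonneg {ε : ℝ} {x : GEState × Bool → ℝ} (hx : ∀ sa, 0 ≤ x sa)
    (hε : ε ≤ 1 / 2) : 0 ≤ sumRateDeficit ε x := by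
  unfold sumRateDeficit
  have h₁ : 0 ≤ 2 * (1 - ε) := by linarith
  have h₂ : 0 ≤ 1 - 2 * ε := by linarith
  have := hx ((true, true, true), false)
  have := hx ((false, true, true), false)
  have := mul_nonneg h₁ (hx ((true, true, false), false))
  have := mul_nonneg h₁ (hx ((false, false, true), false))
  have := mul_nonneg h₂ (hx ((true, false, true), true))
  have := mul_nonneg h₂ (hx ((false, true, false), true))
  linarith

theorem sumRate_add_sumRateDeficit {ε : ℝ} {x : GEState × Bool → ℝ} (hx : x ∈ GEX ε)
    (hε₀ : 0 < ε) (hε₁ : ε < 1) :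
    GErate1 x + GErate2 x + sumRateDeficit ε x = 3 / 4 - ε / 2 := by
  obtain ⟨-, hsum, hbal⟩ := hx
  have hTTF := hbal (true, true, false)
  have hTFT := hbal (true, false, true)
  have hTFF := hbal (true, false, false)
  have hFTF := hbal (false, true, false)
  have hFFT := hbal (false, false, true)
  have hFFF := hbal (false, false, false)
  norm_num [Fintype.sum_prod_type, GEP, chFlip] at hsum hTTF hTFT hTFF hFTF hFFT hFFF
  have hscale : 8 * ε * (1 - ε) ≠ 0 := by positivity
  -- The dual multipliers, scaled by `8ε(1-ε)` to clear their denominators.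
  refine mul_left_cancel₀ hscale ?_
  unfold GErate1 GErate2 sumRateDeficit
  linear_combination -((1 - 2 * ε) ^ 2 * hTTF + ((1 - 2 * ε) ^ 2 + 8 * ε * (1 - ε)) * hTFT
    + 4 * (1 - ε) * hTFF + ((1 - 2 * ε) ^ 2 + 8 * ε * (1 - ε)) * hFTF
    + (1 - 2 * ε) ^ 2 * hFFT + 4 * (1 - ε) * hFFF
    + 8 * ε * (1 - ε) * (ε / 2 - 3 / 4) * hsum)

/-- Stationary state-action frequencies of the policy that stays exactly when the channel of
the current queue is ON or both channels are OFF. -/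
noncomputable def optimalFrequency (ε : ℝ) : GEState × Bool → ℝ
  | ((true, true, true), true) => 1 / 8
  | ((true, true, false), true) => (1 - ε) / 4
  | ((true, false, true), false) => ε / 4
  | ((true, false, false), true) => 1 / 8
  | ((false, true, true), true) => 1 / 8
  | ((false, false, true), true) => (1 - ε) / 4
  | ((false, true, false), false) => ε / 4
  | ((false, false, false), true) => 1 / 8
  | _ => 0

theorem optimalFrequency_mem_GEX {ε : ℝ} (hε₀ : 0 ≤ ε) (hε₁ : ε ≤ 1) :
    optimalFrequency ε ∈ GEX ε := by
  refine ⟨?_, ?_, ?_⟩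
  · rintro ⟨⟨m, c₁, c₂⟩, a⟩
    cases m <;> cases c₁ <;> cases c₂ <;> cases a <;> simp only [optimalFrequency] <;> linarith
  · simp only [Fintype.sum_prod_type, Fintype.sum_bool, optimalFrequency]
    ring
  · rintro ⟨m, c₁, c₂⟩
    cases m <;> cases c₁ <;> cases c₂ <;>
      · norm_num [Fintype.sum_prod_type, GEP, chFlip, optimalFrequency]
        ring

theorem sumRateDeficit_optimalFrequency (ε : ℝ) :
    sumRateDeficit ε (optimalFrequency ε) = 0 := by
  simp [sumRateDeficit, optimalFrequency]

/-- For every `ε ∈ (0, 1/2]`, the maximum of `r₁(x) + r₂(x)` over the state-action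
polytope `X(ε)` equals `3/4 - ε/2`: every `x ∈ X(ε)` satisfies the bound, and some
`x ∈ X(ε)` attains it. -/
theorem max_sum_rate (ε : ℝ) (hε : ε ∈ Set.Ioc (0 : ℝ) (1 / 2)) :
    (∀ x ∈ GEX ε, GErate1 x + GErate2 x ≤ 3 / 4 - ε / 2) ∧
    (∃ x ∈ GEX ε, GErate1 x + GErate2 x = 3 / 4 - ε / 2) := by
  obtain ⟨hε₀, hε₁⟩ := hε
  have hε_lt_one : ε < 1 := by linarith
  have hopt := optimalFrequency_mem_GEX hε₀.le hε_lt_one.le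
  refine ⟨fun x hx => ?_, optimalFrequency ε, hopt, ?_⟩
  · linarith [sumRate_add_sumRateDeficit hx hε₀ hε_lt_one, sumRateDeficit_nonneg hx.1 hε₁]
  · linarith [sumRate_add_sumRateDeficit hopt hε₀ hε_lt_one, sumRateDeficit_optimalFrequency ε]
end

section
/- For every ε ∈ (0, 1/2], there exists x in the state-action polytope X(ε) whose rate pair equals (r₁, r₂) = ( (1−ε)(3−2ε) / (4(2−ε)) , (3−2ε) / (4(2−ε)) ). (This is the rate pair of the stationary deterministic policy that stays at queue 1 exactly when C₁ = 1 and stays at queue 2 except in channel state (C₁,C₂) = (1,0).) -/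
/-!
Take the state-action frequencies of the deterministic policy `π` of the statement: if `μ` is a
stationary distribution of the Markov chain that `π` induces on states, then putting mass `μ s`
on `(s, π s)` satisfies the balance equations of `X(ε)`. Under `π` the channel pair evolves on its
own and is uniform at stationarity, and solving the eight balance equations gives `μ` explicitly;
the two rates are then sums of two of its entries.
-/

open Finset

noncomputable def occupationMeasure (π : GEState → Bool) (μ : GEState → ℝ) :
    GEState × Bool → ℝ :=
  fun sa => if sa.2 = π sa.1 then μ sa.1 else 0

lemma sum_occupationMeasure_action (π : GEState → Bool) (μ : GEState → ℝ) (s : GEState) :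
    ∑ a : Bool, occupationMeasure π μ (s, a) = μ s := by
  simp [occupationMeasure]

lemma occupationMeasure_mem_GEX {ε : ℝ} (π : GEState → Bool) (μ : GEState → ℝ)
    (h_nonneg : ∀ s, 0 ≤ μ s) (h_sum : ∑ s, μ s = 1)
    (h_stat : ∀ s, μ s = ∑ s', GEP ε s s' (π s') * μ s') :
    occupationMeasure π μ ∈ GEX ε := by
  refine ⟨fun ⟨s, a⟩ => ?_, ?_, fun s => ?_⟩
  · unfold occupationMeasure
    split_ifs
    exacts [h_nonneg s, le_rfl]
  · rw [Fintype.sum_prod_type]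
    simpa only [sum_occupationMeasure_action] using h_sum
  · rw [sum_occupationMeasure_action, h_stat s]
    refine Finset.sum_congr rfl fun s' _ => ?_
    simp [occupationMeasure]

def cornerPolicy : GEState → Bool
  | (true, c₁, _) => c₁
  | (false, c₁, c₂) => !(c₁ && !c₂)

/-- The stationary distribution of `cornerPolicy`, up to the factor `4 * (2 - ε)`: each channel
pair `(c₁, c₂)` carries weight `2 - ε` (the channels are uniform at stationarity), split between
the two server locations by the balance equations. -/
noncomputable def cornerWeight (ε : ℝ) : GEState → ℝ
  | (true, true, true) => 1 - ε
  | (true, true, false) => 2 * (1 - ε) ^ 2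
  | (true, false, true) => ε
  | (true, false, false) => 2 * ε * (1 - ε)
  | (false, true, true) => 1
  | (false, true, false) => ε * (3 - 2 * ε)
  | (false, false, true) => 2 - 2 * ε
  | (false, false, false) => 2 * ε ^ 2 - 3 * ε + 2

noncomputable def cornerDist (ε : ℝ) (s : GEState) : ℝ := cornerWeight ε s / (4 * (2 - ε))

lemma cornerWeight_stationary (ε : ℝ) (s : GEState) :
    cornerWeight ε s = ∑ s', GEP ε s s' (cornerPolicy s') * cornerWeight ε s' := by
  obtain ⟨m, c₁, c₂⟩ := s
  cases m <;> cases c₁ <;> cases c₂ <;>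
    simp [GEP, chFlip, cornerPolicy, cornerWeight, Fintype.sum_prod_type] <;> ring

lemma cornerDist_stationary (ε : ℝ) (s : GEState) :
    cornerDist ε s = ∑ s', GEP ε s s' (cornerPolicy s') * cornerDist ε s' := by
  simp only [cornerDist, mul_div_assoc', ← Finset.sum_div, ← cornerWeight_stationary]

lemma sum_cornerWeight (ε : ℝ) : ∑ s, cornerWeight ε s = 4 * (2 - ε) := by
  simp [cornerWeight, Fintype.sum_prod_type]
  ring

lemma sum_cornerDist {ε : ℝ} (hε : ε ≠ 2) : ∑ s, cornerDist ε s = 1 := by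
  unfold cornerDist
  rw [← Finset.sum_div, sum_cornerWeight]
  exact div_self (mul_ne_zero four_ne_zero (sub_ne_zero.mpr hε.symm))

lemma cornerDist_nonneg {ε : ℝ} (hε₀ : 0 ≤ ε) (hε₁ : ε ≤ 1) (s : GEState) :
    0 ≤ cornerDist ε s := by
  refine div_nonneg ?_ (by linarith)
  obtain ⟨m, c₁, c₂⟩ := s
  cases m <;> cases c₁ <;> cases c₂ <;> simp only [cornerWeight] <;> nlinarith

lemma GErate1_corner (ε : ℝ) :
    GErate1 (occupationMeasure cornerPolicy (cornerDist ε)) =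
      (1 - ε) * (3 - 2 * ε) / (4 * (2 - ε)) := by
  simp +decide only [GErate1, occupationMeasure, cornerDist, cornerWeight, if_true]
  ring

lemma GErate2_corner (ε : ℝ) :
    GErate2 (occupationMeasure cornerPolicy (cornerDist ε)) = (3 - 2 * ε) / (4 * (2 - ε)) := by
  simp +decide only [GErate2, occupationMeasure, cornerDist, cornerWeight, if_true]
  ring

/-- For every `ε ∈ (0, 1/2]`, some `x` in the state-action polytope `X(ε)` has rate pair
`((1-ε)(3-2ε)/(4(2-ε)), (3-2ε)/(4(2-ε)))`. -/
theorem exists_rate_pair_corner (ε : ℝ) (hε : ε ∈ Set.Ioc (0 : ℝ) (1 / 2)) :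
    ∃ x ∈ GEX ε,
      GErate1 x = (1 - ε) * (3 - 2 * ε) / (4 * (2 - ε)) ∧
      GErate2 x = (3 - 2 * ε) / (4 * (2 - ε)) := by
  obtain ⟨hε₀, hε₁⟩ := hε
  refine ⟨occupationMeasure cornerPolicy (cornerDist ε), ?_, GErate1_corner ε, GErate2_corner ε⟩
  exact occupationMeasure_mem_GEX _ _ (cornerDist_nonneg hε₀.le (by linarith))
    (sum_cornerDist (by linarith)) (cornerDist_stationary ε)
end

section
/- Fix N ≥ 2 and p₀₁, p₁₀ ∈ (0,1) with p₀₁ + p₁₀ ≤ 1, and let C₀ = (p₁₀/(p₁₀+p₀₁))^N. Then every x in the state-action polytope X of the Gilbert–Elliot N-queue model satisfies the sum-rate upper bound Σ_{i=1}^N r_i(x) ≤ 1 − C₀ − ( p₁₀(1 − C₀) − p₀₁·C₀ ). -/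
open Finset

/-- State of the Gilbert–Elliot `N`-queue model: the server location `m ∈ Fin N` and the
channel state vector `c : Fin N → Bool` (`true` = ON). -/
abbrev NState (N : ℕ) : Type := Fin N × (Fin N → Bool)

/-- One-step Gilbert–Elliot channel transition: from ON the channel moves to OFF with
probability `p₁₀`, from OFF it moves to ON with probability `p₀₁`. -/
noncomputable def chTrans (p01 p10 : ℝ) (c c' : Bool) : ℝ :=
  if c then (if c' then 1 - p10 else p10) else (if c' then p01 else 1 - p01)

/-- Transition probability of going to state `s'` from state `s` under action `a`:
the next location is `a`, and the channels move independently. -/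
noncomputable def NP (N : ℕ) (p01 p10 : ℝ) (s' s : NState N) (a : Fin N) : ℝ :=
  (if s'.1 = a then (1 : ℝ) else 0) * ∏ i : Fin N, chTrans p01 p10 (s.2 i) (s'.2 i)

/-- The state-action polytope `X`: nonnegative, normalized vectors satisfying the
balance equations. -/
def NX (N : ℕ) (p01 p10 : ℝ) : Set (NState N × Fin N → ℝ) :=
  {x | (∀ sa, 0 ≤ x sa) ∧ (∑ sa : NState N × Fin N, x sa) = 1 ∧
    ∀ s : NState N, (∑ a : Fin N, x (s, a)) =
      ∑ s' : NState N, ∑ a : Fin N, NP N p01 p10 s s' a * x (s', a)}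

/-- Rate of queue `i` under `x`: the frequency of staying at queue `i` while its
channel is ON. -/
noncomputable def Nrate (N : ℕ) (x : NState N × Fin N → ℝ) (i : Fin N) : ℝ :=
  ∑ c : Fin N → Bool, if c i then x ((i, c), i) else 0

/-!
The sum of the rates is at most the probability `T` that the channel at the server's current
location is ON. The current location is the previous action, so the balance equations give
`T = p₀₁ + (1 - p₀₁ - p₁₀) Q`, where `Q` is the probability that the channel of the chosen action
is ON, and `Q ≤ 1 - P(all channels OFF)`. The channels evolve independently of the actions, so
their marginal is invariant under the product channel chain. Testing it against
`φ t = E ∏ᵢ (p₁₀ + t e(cᵢ))`, with `e` the nontrivial one-channel eigenfunction, gives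
`φ t = φ ((1 - p₀₁ - p₁₀) t)`, hence `φ 1 = φ 0 = p₁₀ ^ N`, i.e. `P(all OFF) = C₀`.
-/

lemma Continuous.apply_eq_apply_zero_of_apply_mul_eq {𝕜 α : Type*} [NormedField 𝕜]
    [TopologicalSpace α] [T2Space α] {φ : 𝕜 → α} (hφ : Continuous φ) {L : 𝕜} (hL : ‖L‖ < 1)
    (h : ∀ t, φ (L * t) = φ t) (t : 𝕜) : φ t = φ 0 := by
  have hpow : ∀ n : ℕ, φ (L ^ n * t) = φ t := by
    intro n
    induction n with
    | zero => simp
    | succ n ih => rw [pow_succ', mul_assoc, h, ih]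
  have hlim : Filter.Tendsto (fun n : ℕ => φ (L ^ n * t)) Filter.atTop (nhds (φ 0)) := by
    have := (tendsto_pow_atTop_nhds_zero_of_norm_lt_one hL).mul_const t
    rw [zero_mul] at this
    exact (hφ.tendsto 0).comp this
  simp only [hpow] at hlim
  exact tendsto_nhds_unique tendsto_const_nhds hlim

section

variable {N : ℕ} {p01 p10 : ℝ} {x : NState N × Fin N → ℝ}

noncomputable def chKernel (p01 p10 : ℝ) (c c' : Fin N → Bool) : ℝ :=
  ∏ i, chTrans p01 p10 (c i) (c' i)

/-- The nontrivial eigenfunction of `chTrans`, with eigenvalue `1 - p₀₁ - p₁₀`; it is chosen so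
that `p₁₀ + chEigen b = (p₀₁ + p₁₀) · [b = OFF]`. -/
def chEigen (p01 p10 : ℝ) (c : Bool) : ℝ := if c then -p10 else p01

def stateMarginal (x : NState N × Fin N → ℝ) (s : NState N) : ℝ := ∑ a, x (s, a)

lemma sum_chTrans (p01 p10 : ℝ) (c : Bool) : ∑ c', chTrans p01 p10 c c' = 1 := by
  cases c <;> simp [chTrans]

lemma chTrans_true (p01 p10 : ℝ) (c : Bool) :
    chTrans p01 p10 c true = p01 + (1 - p01 - p10) * (if c then 1 else 0) := by
  cases c <;> simp [chTrans]; ring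

lemma sum_chTrans_mul_chEigen (p01 p10 : ℝ) (c : Bool) :
    ∑ c', chTrans p01 p10 c c' * chEigen p01 p10 c' = (1 - p01 - p10) * chEigen p01 p10 c := by
  cases c <;> simp [chTrans, chEigen] <;> ring

lemma sum_chKernel_mul_prod (c : Fin N → Bool) (w : Fin N → Bool → ℝ) :
    ∑ c', chKernel p01 p10 c c' * ∏ i, w i (c' i) =
      ∏ i, ∑ b, chTrans p01 p10 (c i) b * w i b := by
  simp only [Fintype.prod_sum, chKernel, prod_mul_distrib]

lemma sum_chKernel_mul_apply (c : Fin N → Bool) (j : Fin N) (g : Bool → ℝ) :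
    ∑ c', chKernel p01 p10 c c' * g (c' j) = ∑ b, chTrans p01 p10 (c j) b * g b := by
  have h := sum_chKernel_mul_prod (p01 := p01) (p10 := p10) c
    (fun i b => if i = j then g b else 1)
  simp only [mul_ite, mul_one, prod_ite_eq', mem_univ, if_true] at h
  simpa only [Finset.sum_ite_irrel, sum_chTrans, prod_ite_eq', mem_univ, if_true] using h

lemma sum_stateMarginal_eq_one (hx : x ∈ NX N p01 p10) : ∑ s, stateMarginal x s = 1 := by
  simp only [stateMarginal]; rw [← Fintype.sum_prod_type']; exact hx.2.1

lemma sum_stateMarginal_mul (hx : x ∈ NX N p01 p10) (G : NState N → ℝ) :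
    ∑ s, stateMarginal x s * G s =
      ∑ s, ∑ a, x (s, a) * ∑ c, chKernel p01 p10 s.2 c * G (a, c) := by
  have hstep : ∀ s a,
      ∑ s', NP N p01 p10 s' s a * G s' = ∑ c, chKernel p01 p10 s.2 c * G (a, c) := by
    intro s a
    simp [NP, Fintype.sum_prod_type, chKernel, ite_mul]
  simp_rw [stateMarginal, hx.2.2, sum_mul, ← hstep, mul_sum]
  rw [sum_comm]
  refine sum_congr rfl fun s _ => ?_
  rw [sum_comm]
  exact sum_congr rfl fun a _ => sum_congr rfl fun s' _ => by ring

lemma sum_stateMarginal_mul_eq_sum_chKernel (hx : x ∈ NX N p01 p10) (g : (Fin N → Bool) → ℝ) :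
    ∑ s, stateMarginal x s * g s.2 =
      ∑ s, stateMarginal x s * ∑ c, chKernel p01 p10 s.2 c * g c := by
  rw [sum_stateMarginal_mul hx (fun s => g s.2)]
  simp only [stateMarginal, sum_mul]

lemma sum_stateMarginal_mul_prod_chEigen (hx : x ∈ NX N p01 p10) (t : ℝ) :
    ∑ s, stateMarginal x s * ∏ i, (p10 + (1 - p01 - p10) * t * chEigen p01 p10 (s.2 i)) =
      ∑ s, stateMarginal x s * ∏ i, (p10 + t * chEigen p01 p10 (s.2 i)) := by
  rw [sum_stateMarginal_mul_eq_sum_chKernel hx (fun c => ∏ i, (p10 + t * chEigen p01 p10 (c i)))]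
  refine sum_congr rfl fun s _ => ?_
  rw [sum_chKernel_mul_prod s.2 (fun _ b => p10 + t * chEigen p01 p10 b)]
  congr 1
  refine prod_congr rfl fun i _ => ?_
  simp only [mul_add, sum_add_distrib, ← sum_mul, sum_chTrans, mul_left_comm _ t, ← mul_sum,
    sum_chTrans_mul_chEigen]
  ring

lemma sum_stateMarginal_mul_allOff (hx : x ∈ NX N p01 p10) (hpos : 0 < p01 + p10)
    (hlt : p01 + p10 < 2) :
    ∑ s, stateMarginal x s * ∏ i, (if s.2 i then (0 : ℝ) else 1) = (p10 / (p10 + p01)) ^ N := by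
  set φ : ℝ → ℝ := fun t => ∑ s, stateMarginal x s * ∏ i, (p10 + t * chEigen p01 p10 (s.2 i))
  have hφ : Continuous φ := by fun_prop
  have hL : ‖1 - p01 - p10‖ < 1 := by
    rw [Real.norm_eq_abs, abs_lt]; constructor <;> linarith
  have hfix := hφ.apply_eq_apply_zero_of_apply_mul_eq hL
    (sum_stateMarginal_mul_prod_chEigen hx) 1
  have h1 : φ 1 =
      (p01 + p10) ^ N * ∑ s, stateMarginal x s * ∏ i, (if s.2 i then (0 : ℝ) else 1) := by
    simp only [φ, mul_sum]
    refine sum_congr rfl fun s _ => ?_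
    rw [mul_left_comm, ← Fin.prod_const, ← prod_mul_distrib]
    congr 1
    refine prod_congr rfl fun i _ => ?_
    cases s.2 i <;> simp [chEigen, add_comm]
  have h0 : φ 0 = p10 ^ N := by
    simp [φ, ← sum_mul, sum_stateMarginal_eq_one hx]
  rw [div_pow, eq_div_iff (by rw [add_comm]; exact (pow_pos hpos N).ne'), add_comm p10, mul_comm,
    ← h1, hfix, h0]

lemma sum_Nrate_le (hx0 : ∀ sa, 0 ≤ x sa) :
    ∑ i, Nrate N x i ≤ ∑ s, stateMarginal x s * (if s.2 s.1 then 1 else 0) := by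
  rw [Fintype.sum_prod_type]
  refine sum_le_sum fun i _ => sum_le_sum fun c _ => ?_
  split_ifs
  · simpa [stateMarginal] using single_le_sum (fun a _ => hx0 ((i, c), a)) (mem_univ i)
  · simp

lemma sum_stateMarginal_mul_servedOn (hx : x ∈ NX N p01 p10) :
    ∑ s, stateMarginal x s * (if s.2 s.1 then 1 else 0) =
      p01 + (1 - p01 - p10) * ∑ s, ∑ a, x (s, a) * (if s.2 a then 1 else 0) := by
  have hmass : ∑ s, ∑ a, x (s, a) = 1 := sum_stateMarginal_eq_one hx
  rw [sum_stateMarginal_mul hx (fun s => if s.2 s.1 then 1 else 0)]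
  simp only [sum_chKernel_mul_apply _ _ (fun b => if b then (1 : ℝ) else 0), Fintype.sum_bool,
    if_true, Bool.false_eq_true, if_false, mul_one, mul_zero, add_zero, chTrans_true, mul_add,
    sum_add_distrib, ← sum_mul, hmass, one_mul, mul_left_comm _ (1 - p01 - p10), ← mul_sum]

lemma sum_mul_actionOn_le (hx : x ∈ NX N p01 p10) :
    ∑ s, ∑ a, x (s, a) * (if s.2 a then 1 else 0) ≤
      1 - ∑ s, stateMarginal x s * ∏ i, (if s.2 i then (0 : ℝ) else 1) := by
  have hind : ∀ (c : Fin N → Bool) (a : Fin N),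
      (if c a then 1 else 0) ≤ 1 - ∏ i, (if c i then (0 : ℝ) else 1) := by
    intro c a
    by_cases h : c a
    · simp [h, prod_eq_zero (mem_univ a)]
    · simpa [h] using prod_le_one (fun i _ => by split_ifs <;> norm_num)
        (fun i _ => by split_ifs <;> norm_num)
  calc _ ≤ ∑ s, ∑ a, x (s, a) * (1 - ∏ i, (if s.2 i then (0 : ℝ) else 1)) :=
        sum_le_sum fun s _ => sum_le_sum fun a _ =>
          mul_le_mul_of_nonneg_left (hind s.2 a) (hx.1 _)
    _ = ∑ s, stateMarginal x s * (1 - ∏ i, (if s.2 i then (0 : ℝ) else 1)) := by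
        simp only [stateMarginal, sum_mul]
    _ = _ := by simp only [mul_sub, mul_one, sum_sub_distrib, sum_stateMarginal_eq_one hx]

end

theorem sum_rate_upper_bound_general (N : ℕ) (p01 p10 : ℝ)
    (h01 : p01 ∈ Set.Ioo (0 : ℝ) 1) (h10 : p10 ∈ Set.Ioo (0 : ℝ) 1)
    (hsum : p01 + p10 ≤ 1) :
    ∀ x ∈ NX N p01 p10,
      ∑ i : Fin N, Nrate N x i ≤
        1 - (p10 / (p10 + p01)) ^ N -
          (p10 * (1 - (p10 / (p10 + p01)) ^ N) - p01 * (p10 / (p10 + p01)) ^ N) := by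
  intro x hx
  have hOn := sum_mul_actionOn_le hx
  rw [sum_stateMarginal_mul_allOff hx (by linarith [h01.1, h10.1]) (by linarith)] at hOn
  have hL : 0 ≤ 1 - p01 - p10 := by linarith
  calc ∑ i, Nrate N x i ≤ _ := sum_Nrate_le hx.1
    _ = _ := sum_stateMarginal_mul_servedOn hx
    _ ≤ p01 + (1 - p01 - p10) * (1 - (p10 / (p10 + p01)) ^ N) := by gcongr
    _ = _ := by ring

/-- Sum-rate upper bound: with `C₀ = (p₁₀/(p₁₀+p₀₁))^N`, every `x` in the state-action
polytope satisfies `Σᵢ rᵢ(x) ≤ 1 - C₀ - (p₁₀(1-C₀) - p₀₁ C₀)`. -/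
theorem sum_rate_upper_bound (N : ℕ) (hN : 2 ≤ N) (p01 p10 : ℝ)
    (h01 : p01 ∈ Set.Ioo (0 : ℝ) 1) (h10 : p10 ∈ Set.Ioo (0 : ℝ) 1)
    (hsum : p01 + p10 ≤ 1) :
    ∀ x ∈ NX N p01 p10,
      ∑ i : Fin N, Nrate N x i ≤
        1 - (p10 / (p10 + p01)) ^ N -
          (p10 * (1 - (p10 / (p10 + p01)) ^ N) - p01 * (p10 / (p10 + p01)) ^ N) :=
  sum_rate_upper_bound_general N p01 p10 h01 h10 hsum
end

section
/- Fix N ≥ 2 and p₁, …, p_N ∈ (0,1]. In the N-queue model with memoryless (i.i.d.) channels, the set of rate vectors { (r₁(x), …, r_N(x)) : x ∈ X } equals the simplex { r ∈ ℝ^N : r_i ≥ 0 for all i, and Σ_{i=1}^N r_i / p_i ≤ 1 }. -/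
/-!
Since the channels are redrawn independently of everything at every step, stationarity forces
the mass of `x` at location `m` with channel vector `c` to be `π(c) · y_m`, where `π` is the
product law of the channels and `y_m` is the long-run frequency of choosing action `m`. Serving
queue `i` needs the server at `i` with channel `i` ON, so `r_i ≤ p_i y_i`, and `∑ y = 1`.
Conversely, `x((m, c), a) = π(c) z(m, a)` is stationary for every circulation `z` on the
locations, and its rates are `p_i z(i, i)`; for `N ≥ 2` the slack `1 - ∑ r_i / p_i` can be
placed off the diagonal of `z`.
-/

open Finset

/-- Transition probability for memoryless (i.i.d.) channels: from state `s` under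
action `a`, the next location is `a`, and independently the next value of channel `i`
is ON with probability `p i` regardless of its current value. -/
noncomputable def NPiid (N : ℕ) (p : Fin N → ℝ) (s' s : NState N) (a : Fin N) : ℝ :=
  (if s'.1 = a then (1 : ℝ) else 0) *
    ∏ i : Fin N, (if s'.2 i then p i else 1 - p i)

/-- The state-action polytope `X` for the memoryless-channel model. -/
def NXiid (N : ℕ) (p : Fin N → ℝ) : Set (NState N × Fin N → ℝ) :=
  {x | (∀ sa, 0 ≤ x sa) ∧ (∑ sa : NState N × Fin N, x sa) = 1 ∧
    ∀ s : NState N, (∑ a : Fin N, x (s, a)) =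
      ∑ s' : NState N, ∑ a : Fin N, NPiid N p s s' a * x (s', a)}

section ChannelLaw

variable {ι : Type*} [Fintype ι] (p : ι → ℝ)

noncomputable def chanProb (c : ι → Bool) : ℝ :=
  ∏ i, if c i then p i else 1 - p i

variable {p}

lemma chanProb_nonneg (hp0 : ∀ i, 0 ≤ p i) (hp1 : ∀ i, p i ≤ 1) (c : ι → Bool) :
    0 ≤ chanProb p c :=
  prod_nonneg fun i _ => by split <;> linarith [hp0 i, hp1 i]

variable [DecidableEq ι]

lemma sum_chanProb : ∑ c : ι → Bool, chanProb p c = 1 := by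
  refine (Fintype.prod_sum fun i (b : Bool) => if b then p i else 1 - p i).symm.trans ?_
  simp

lemma sum_chanProb_of_apply (i : ι) :
    ∑ c : ι → Bool, (if c i then chanProb p c else 0) = p i := by
  -- the indicator of `c i` is absorbed by zeroing the `false` branch of the `i`-th factor
  let f : ι → Bool → ℝ := fun j b => if b then p j else if j = i then 0 else 1 - p j
  have hsummand : ∀ c : ι → Bool, (if c i then chanProb p c else 0) = ∏ j, f j (c j) := by
    intro c
    by_cases hc : c i
    · refine (if_pos hc).trans (prod_congr rfl fun j _ => ?_)
      by_cases hj : j = i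
      · subst hj; simp [f, hc]
      · simp [f, hj]
    · rw [if_neg hc, eq_comm]
      exact prod_eq_zero (mem_univ i) (by simp [f, hc])
  have hfactor : ∀ j, ∑ b, f j b = if j = i then p j else 1 := fun j => by
    by_cases hj : j = i <;> simp [f, hj]
  rw [sum_congr rfl fun c _ => hsummand c, ← Fintype.prod_sum, prod_congr rfl fun j _ => hfactor j]
  simp

end ChannelLaw

lemma exists_symm_nonneg_diag_eq {ι : Type*} [Fintype ι] [DecidableEq ι]
    (hι : 1 < Fintype.card ι) {d : ι → ℝ} (hd0 : ∀ i, 0 ≤ d i) (hd1 : ∑ i, d i ≤ 1) :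
    ∃ z : ι → ι → ℝ, (∀ m a, 0 ≤ z m a) ∧ (∀ m a, z m a = z a m) ∧
      ∑ m, ∑ a, z m a = 1 ∧ ∀ i, z i i = d i := by
  set n : ℝ := (Fintype.card ι : ℝ)
  -- the slack `1 - ∑ d` is spread uniformly over the `n (n - 1)` off-diagonal entries
  set ε : ℝ := (1 - ∑ i, d i) / (n * (n - 1))
  have hn : 1 < n := by simp only [n]; exact_mod_cast hι
  refine ⟨fun m a => if m = a then d m else ε, fun m a => ?_, fun m a => ?_, ?_, by simp⟩
  · dsimp only
    split
    · exact hd0 m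
    · exact div_nonneg (by linarith) (by nlinarith)
  · by_cases h : m = a
    · subst h; rfl
    · simp [h, Ne.symm h]
  · have hrow : ∀ m, ∑ a, (if m = a then d m else ε) = d m + (n - 1) * ε := by
      intro m
      have hsplit : ∀ a, (if m = a then d m else ε) = ε + if m = a then d m - ε else 0 :=
        fun a => by split <;> ring
      simp only [hsplit, sum_add_distrib, sum_ite_eq, mem_univ, if_true, sum_const, card_univ,
        nsmul_eq_mul]
      ring
    simp_rw [hrow, sum_add_distrib, sum_const, card_univ, nsmul_eq_mul, ← mul_assoc]
    change ∑ i, d i + n * (n - 1) * ε = 1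
    rw [mul_div_cancel₀ _ (by nlinarith)]
    ring

namespace NXiid

variable {N : ℕ} {p : Fin N → ℝ} {x : NState N × Fin N → ℝ}

noncomputable def actionFreq (x : NState N × Fin N → ℝ) (a : Fin N) : ℝ :=
  ∑ s, x (s, a)

lemma sum_actionFreq : ∑ a, actionFreq x a = ∑ sa, x sa := by
  rw [Fintype.sum_prod_type_right]
  rfl

lemma NPiid_eq (s' s : NState N) (a : Fin N) :
    NPiid N p s' s a = (if s'.1 = a then 1 else 0) * chanProb p s'.2 :=
  rfl

lemma sum_action_eq (hx : x ∈ NXiid N p) (m : Fin N) (c : Fin N → Bool) :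
    ∑ a, x ((m, c), a) = chanProb p c * actionFreq x m := by
  rw [hx.2.2 (m, c), actionFreq, mul_sum]
  refine sum_congr rfl fun s _ => ?_
  simp_rw [NPiid_eq, ite_mul, one_mul, zero_mul, sum_ite_eq, mem_univ, if_true]

lemma Nrate_nonneg (hx0 : ∀ sa, 0 ≤ x sa) (i : Fin N) : 0 ≤ Nrate N x i :=
  sum_nonneg fun c _ => by split <;> simp [hx0]

lemma Nrate_le (hx : x ∈ NXiid N p) (i : Fin N) : Nrate N x i ≤ p i * actionFreq x i :=
  calc Nrate N x i ≤ ∑ c : Fin N → Bool, if c i then ∑ a, x ((i, c), a) else 0 :=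
        sum_le_sum fun c _ => by
          split
          · exact single_le_sum (fun a _ => hx.1 _) (mem_univ i)
          · rfl
    _ = ∑ c : Fin N → Bool, (if c i then chanProb p c else 0) * actionFreq x i := by
        simp_rw [sum_action_eq hx, ite_mul, zero_mul]
    _ = p i * actionFreq x i := by rw [← sum_mul, sum_chanProb_of_apply]

lemma sum_Nrate_div_le_one (hp : ∀ i, 0 < p i) (hx : x ∈ NXiid N p) :
    ∑ i, Nrate N x i / p i ≤ 1 :=
  calc ∑ i, Nrate N x i / p i ≤ ∑ i, actionFreq x i :=
        sum_le_sum fun i _ => by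
          rw [div_le_iff₀ (hp i), mul_comm]
          exact Nrate_le hx i
    _ = 1 := by rw [sum_actionFreq, hx.2.1]

noncomputable def liftIid (p : Fin N → ℝ) (z : Fin N → Fin N → ℝ) : NState N × Fin N → ℝ :=
  fun sa => chanProb p sa.1.2 * z sa.1.1 sa.2

lemma liftIid_mem (hp0 : ∀ i, 0 ≤ p i) (hp1 : ∀ i, p i ≤ 1) {z : Fin N → Fin N → ℝ}
    (hz0 : ∀ m a, 0 ≤ z m a) (hz1 : ∑ m, ∑ a, z m a = 1)
    (hzbal : ∀ m, ∑ a, z m a = ∑ a, z a m) : liftIid p z ∈ NXiid N p := by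
  refine ⟨fun sa => mul_nonneg (chanProb_nonneg hp0 hp1 _) (hz0 _ _), ?_, ?_⟩
  · simp_rw [Fintype.sum_prod_type, liftIid, ← mul_sum, ← sum_mul, sum_chanProb, one_mul, hz1]
  · rintro ⟨m, c⟩
    change ∑ a, chanProb p c * z m a = _
    rw [← mul_sum, hzbal m, mul_sum, Fintype.sum_prod_type]
    refine sum_congr rfl fun m' _ => ?_
    simp_rw [NPiid_eq, liftIid, ite_mul, one_mul, zero_mul, sum_ite_eq, mem_univ, if_true,
      mul_left_comm (chanProb p c), ← sum_mul, sum_chanProb, one_mul]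

lemma Nrate_liftIid (z : Fin N → Fin N → ℝ) (i : Fin N) :
    Nrate N (liftIid p z) i = p i * z i i := by
  simp_rw [Nrate, liftIid, ← ite_zero_mul, ← sum_mul, sum_chanProb_of_apply]

end NXiid

/-- For memoryless (i.i.d.) channels with ON probabilities `pᵢ ∈ (0,1]`, the set of
achievable rate vectors equals the simplex `{r : rᵢ ≥ 0, Σᵢ rᵢ/pᵢ ≤ 1}`. -/
theorem rate_region_iid (N : ℕ) (hN : 2 ≤ N) (p : Fin N → ℝ)
    (hp : ∀ i, p i ∈ Set.Ioc (0 : ℝ) 1) :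
    {r : Fin N → ℝ | ∃ x ∈ NXiid N p, r = Nrate N x} =
      {r : Fin N → ℝ | (∀ i, 0 ≤ r i) ∧ ∑ i : Fin N, r i / p i ≤ 1} := by
  ext r
  constructor
  · rintro ⟨x, hx, rfl⟩
    exact ⟨NXiid.Nrate_nonneg hx.1, NXiid.sum_Nrate_div_le_one (fun i => (hp i).1) hx⟩
  · rintro ⟨hr0, hr1⟩
    obtain ⟨z, hz0, hzsymm, hz1, hzdiag⟩ := exists_symm_nonneg_diag_eq
      (by rw [Fintype.card_fin]; omega) (fun i => div_nonneg (hr0 i) (hp i).1.le) hr1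
    refine ⟨NXiid.liftIid p z, NXiid.liftIid_mem (fun i => (hp i).1.le) (fun i => (hp i).2)
      hz0 hz1 fun m => sum_congr rfl fun a _ => hzsymm m a, ?_⟩
    funext i
    rw [NXiid.Nrate_liftIid, hzdiag, mul_div_cancel₀ _ (hp i).1.ne']
end

section
/- For every ε ∈ [1 − √2/2, 1/2], the quantity (ε/(1−ε))·( 3/4 − ε + ε/(4(2−ε)) ) + 3/4 − ε/(4(2−ε)) is at least (2√2 − 1)/2, with equality at ε = 1 − √2/2. (Numerically, (2√2 − 1)/2 ≈ 0.914, so the 1-Lookahead Myopic policy attains at least 91.4% of the optimal weighted departure rate in this discrepant region.) -/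
/-!
Over the common denominator `2 - ε`, the gap between the ratio and `(2√2 - 1)/2` is the
concave quadratic `(ε - (1 - √2/2)) * ((3√2 - 2)/2 - ε)`, whose roots `1 - √2/2 ≈ 0.29`
and `(3√2 - 2)/2 ≈ 1.12` enclose every flip probability `ε ≥ 1 - √2/2` below `1`.
-/

namespace MyopicRatio

open Real

noncomputable def ratioLowerBound (ε : ℝ) : ℝ :=
  (ε / (1 - ε)) * (3 / 4 - ε + ε / (4 * (2 - ε))) + 3 / 4 - ε / (4 * (2 - ε))

theorem ratioLowerBound_sub_eq {ε : ℝ} (h₁ : ε ≠ 1) (h₂ : ε ≠ 2) :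
    ratioLowerBound ε - (2 * √2 - 1) / 2 =
      (ε - (1 - √2 / 2)) * ((3 * √2 - 2) / 2 - ε) / (2 - ε) := by
  have h₁' : 1 - ε ≠ 0 := sub_ne_zero.mpr h₁.symm
  have h₂' : 2 - ε ≠ 0 := sub_ne_zero.mpr h₂.symm
  have hsq : √2 ^ 2 = 2 := sq_sqrt zero_le_two
  unfold ratioLowerBound
  field_simp
  linear_combination 12 * (ε - 1) * hsq

theorem le_ratioLowerBound {ε : ℝ} (hlow : 1 - √2 / 2 ≤ ε) (hlt : ε < 1) :
    (2 * √2 - 1) / 2 ≤ ratioLowerBound ε := by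
  have hsqrt : 4 / 3 < √2 := (lt_sqrt (by norm_num)).mpr (by norm_num)
  rw [← sub_nonneg, ratioLowerBound_sub_eq hlt.ne (by linarith)]
  apply div_nonneg (mul_nonneg _ _) <;> linarith

theorem ratioLowerBound_one_sub_sqrt_two_div_two :
    ratioLowerBound (1 - √2 / 2) = (2 * √2 - 1) / 2 := by
  have hpos : 0 < √2 := sqrt_pos.mpr zero_lt_two
  have hgap := ratioLowerBound_sub_eq (ε := 1 - √2 / 2) (by linarith) (by linarith)
  rw [sub_self, zero_mul, zero_div] at hgap
  linarith

end MyopicRatio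

open MyopicRatio in
/-- For every `ε ∈ [1-√2/2, 1/2]`, the lower bound
`(ε/(1-ε))(3/4 - ε + ε/(4(2-ε))) + 3/4 - ε/(4(2-ε))` on the weighted departure-rate
ratio is at least `(2√2 - 1)/2`, with equality at `ε = 1 - √2/2`. -/
theorem myopic_ratio_bound_b1_b0 :
    (∀ ε : ℝ, ε ∈ Set.Icc (1 - Real.sqrt 2 / 2) (1 / 2) →
      (ε / (1 - ε)) * (3 / 4 - ε + ε / (4 * (2 - ε))) + 3 / 4 - ε / (4 * (2 - ε)) ≥
        (2 * Real.sqrt 2 - 1) / 2) ∧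
    ((1 - Real.sqrt 2 / 2) / (1 - (1 - Real.sqrt 2 / 2)) *
        (3 / 4 - (1 - Real.sqrt 2 / 2) +
          (1 - Real.sqrt 2 / 2) / (4 * (2 - (1 - Real.sqrt 2 / 2)))) +
      3 / 4 - (1 - Real.sqrt 2 / 2) / (4 * (2 - (1 - Real.sqrt 2 / 2))) =
      (2 * Real.sqrt 2 - 1) / 2) :=
  ⟨fun _ hε => le_ratioLowerBound hε.1 (by linarith [hε.2]),
    ratioLowerBound_one_sub_sqrt_two_div_two⟩
end

section
/- For every ε ∈ [0, 1 − √2/2], the quantity ((1−ε)/(2−ε))·( 3/4 − ε + ε/(4(2−ε)) ) + 3/4 − ε/(4(2−ε)) is at least (2√2 − 1)/2, with equality at ε = 1 − √2/2. -/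
/-!
Substituting `t = 2 - ε`, the bound becomes `(t³ + (t - 1)³) / (2t²)`, which is increasing for
`t ≥ 1`. Hence it decreases in `ε` on `ε ≤ 1`, and its minimum over the interval is attained at
`ε = 1 - √2/2`, i.e. `t = 1 + √2/2`, where it equals `(2√2 - 1)/2`.
-/

noncomputable section

namespace MyopicRatio

def psiBound (ε : ℝ) : ℝ :=
  ((1 - ε) / (2 - ε)) * (3 / 4 - ε + ε / (4 * (2 - ε))) + 3 / 4 - ε / (4 * (2 - ε))

def sumCubesRatio (t : ℝ) : ℝ := (t ^ 3 + (t - 1) ^ 3) / (2 * t ^ 2)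

theorem psiBound_eq_sumCubesRatio {ε : ℝ} (hε : ε ≠ 2) :
    psiBound ε = sumCubesRatio (2 - ε) := by
  have h : (2 : ℝ) - ε ≠ 0 := sub_ne_zero.2 (Ne.symm hε)
  unfold psiBound sumCubesRatio
  field_simp
  ring

theorem sumCubesRatio_sub {a b : ℝ} (ha : a ≠ 0) (hb : b ≠ 0) :
    sumCubesRatio b - sumCubesRatio a =
      (b - a) * (2 * (a * b) ^ 2 - 3 * (a * b) + a + b) / (2 * a ^ 2 * b ^ 2) := by
  unfold sumCubesRatio
  field_simp
  ring

theorem monotoneOn_sumCubesRatio : MonotoneOn sumCubesRatio (Set.Ici 1) := by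
  intro a (ha : 1 ≤ a) b (hb : 1 ≤ b) hab
  have hfactor : 0 ≤ 2 * (a * b) ^ 2 - 3 * (a * b) + a + b := by
    nlinarith [sq_nonneg (a * b - 3 / 4)]
  rw [← sub_nonneg, sumCubesRatio_sub (by positivity) (by positivity)]
  exact div_nonneg (mul_nonneg (sub_nonneg.2 hab) hfactor) (by positivity)

theorem antitoneOn_psiBound : AntitoneOn psiBound (Set.Iic 1) := by
  intro x (hx : x ≤ 1) y (hy : y ≤ 1) hxy
  rw [psiBound_eq_sumCubesRatio (by linarith), psiBound_eq_sumCubesRatio (by linarith)]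
  exact monotoneOn_sumCubesRatio (show (1 : ℝ) ≤ 2 - y by linarith)
    (show (1 : ℝ) ≤ 2 - x by linarith) (by linarith)

theorem psiBound_critical : psiBound (1 - √2 / 2) = (2 * √2 - 1) / 2 := by
  have hsq : √2 ^ 2 = 2 := Real.sq_sqrt zero_le_two
  rw [psiBound_eq_sumCubesRatio (by linarith [Real.sqrt_nonneg 2]), sumCubesRatio,
    div_eq_iff (by nlinarith [Real.sqrt_nonneg 2])]
  linear_combination (-1 - √2 / 4) * hsq

end MyopicRatio

end

open MyopicRatio in
/-- For every `ε ∈ [0, 1-√2/2]`, the lower bound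
`((1-ε)/(2-ε))(3/4 - ε + ε/(4(2-ε))) + 3/4 - ε/(4(2-ε))` on the weighted departure-rate
ratio is at least `(2√2 - 1)/2`, with equality at `ε = 1 - √2/2`. -/
theorem myopic_ratio_bound_b2_b0 :
    (∀ ε : ℝ, ε ∈ Set.Icc (0 : ℝ) (1 - Real.sqrt 2 / 2) →
      ((1 - ε) / (2 - ε)) * (3 / 4 - ε + ε / (4 * (2 - ε))) + 3 / 4 - ε / (4 * (2 - ε)) ≥
        (2 * Real.sqrt 2 - 1) / 2) ∧
    ((1 - (1 - Real.sqrt 2 / 2)) / (2 - (1 - Real.sqrt 2 / 2)) *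
        (3 / 4 - (1 - Real.sqrt 2 / 2) +
          (1 - Real.sqrt 2 / 2) / (4 * (2 - (1 - Real.sqrt 2 / 2)))) +
      3 / 4 - (1 - Real.sqrt 2 / 2) / (4 * (2 - (1 - Real.sqrt 2 / 2))) =
      (2 * Real.sqrt 2 - 1) / 2) := by
  have hcrit_le_one : 1 - √2 / 2 ≤ 1 := by linarith [Real.sqrt_nonneg 2]
  refine ⟨fun ε hε => ?_, psiBound_critical⟩
  show psiBound ε ≥ _
  rw [← psiBound_critical]
  exact antitoneOn_psiBound (hε.2.trans hcrit_le_one) hcrit_le_one hε.2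
end

section
/- Fix ε ∈ (0, 1). Then every x in the state-action polytope X(ε) of the symmetric Gilbert–Elliot two-queue model has uniform channel marginals: for each fixed channel pair (c₁, c₂) ∈ {0,1}², the sum Σ_{m ∈ {1,2}} Σ_{a ∈ {stay, switch}} x((m, c₁, c₂), a) equals 1/4. -/
open Finset

/-!
The channel pair `(c₁, c₂)` evolves on its own, as the product of two symmetric flip chains,
whatever the server does; so the channel marginal `y` of any `x ∈ X(ε)` is a stationary vector
of that product chain. The functions `1`, `σ(c₁)`, `σ(c₂)`, `σ(c₁)σ(c₂)` (with `σ = ±1`) are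
eigenfunctions of the product chain with eigenvalues `1`, `1 - 2ε`, `1 - 2ε`, `(1 - 2ε)²`; a
stationary vector is orthogonal to every eigenfunction whose eigenvalue is not `1`, and for
`0 < ε < 1` this leaves only the constant component, fixed to `1/4` by normalization.
-/

section Stationary

variable {α β : Type*} [Fintype α] [Fintype β]

theorem sum_mul_eq_zero_of_stationary_of_eigen (K : α → α → ℝ) {y f : α → ℝ} {l : ℝ}
    (hy : ∀ a, y a = ∑ b, K b a * y b) (hf : ∀ b, ∑ a, K b a * f a = l * f b) (hl : l ≠ 1) :
    ∑ a, y a * f a = 0 := by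
  have hfix : ∑ a, y a * f a = l * ∑ a, y a * f a := calc
    ∑ a, y a * f a = ∑ a, ∑ b, K b a * y b * f a :=
      sum_congr rfl fun a _ => by rw [hy a, sum_mul]
    _ = ∑ b, y b * ∑ a, K b a * f a := by
      rw [sum_comm]
      exact sum_congr rfl fun b _ => by rw [mul_sum]; exact sum_congr rfl fun a _ => by ring
    _ = l * ∑ b, y b * f b := by
      simp_rw [hf, mul_sum]
      exact sum_congr rfl fun b _ => by ring
  have h : (1 - l) * ∑ a, y a * f a = 0 := by linarith
  exact (mul_eq_zero.mp h).resolve_left (sub_ne_zero.mpr hl.symm)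

theorem sum_prod_kernel_mul_eigen (P : α → α → ℝ) (Q : β → β → ℝ) {g : α → ℝ} {h : β → ℝ}
    {l m : ℝ} (hg : ∀ a, ∑ a', P a a' * g a' = l * g a)
    (hh : ∀ b, ∑ b', Q b b' * h b' = m * h b) (c : α × β) :
    ∑ c' : α × β, P c.1 c'.1 * Q c.2 c'.2 * (g c'.1 * h c'.2) = l * m * (g c.1 * h c.2) := calc
  _ = (∑ a', P c.1 a' * g a') * ∑ b', Q c.2 b' * h b' := by
    rw [Fintype.sum_prod_type, sum_mul_sum]
    exact sum_congr rfl fun a' _ => sum_congr rfl fun b' _ => by ring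
  _ = l * m * (g c.1 * h c.2) := by rw [hg, hh]; ring

end Stationary

def spin (b : Bool) : ℝ := if b then 1 else -1

theorem sum_chFlip (ε : ℝ) (c : Bool) : ∑ c', chFlip ε c c' = 1 := by
  cases c <;> simp [chFlip]

theorem sum_chFlip_mul_spin (ε : ℝ) (c : Bool) :
    ∑ c', chFlip ε c c' * spin c' = (1 - 2 * ε) * spin c := by
  cases c <;> simp [chFlip, spin] <;> ring

theorem eq_quarter_of_stationary_chFlip {ε : ℝ} (hε : ε ∈ Set.Ioo (0 : ℝ) 1)
    {y : Bool × Bool → ℝ} (hy : ∀ c, y c = ∑ c', chFlip ε c'.1 c.1 * chFlip ε c'.2 c.2 * y c')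
    (hsum : ∑ c, y c = 1) (c : Bool × Bool) : y c = 1 / 4 := by
  obtain ⟨hε0, hε1⟩ := hε
  have hone (c : Bool) : ∑ c', chFlip ε c c' * (fun _ => (1 : ℝ)) c' = 1 * 1 := by
    simpa using sum_chFlip ε c
  have hspin := sum_chFlip_mul_spin ε
  have orth (g h : Bool → ℝ) (l m : ℝ) (hg : ∀ a, ∑ a', chFlip ε a a' * g a' = l * g a)
      (hh : ∀ b, ∑ b', chFlip ε b b' * h b' = m * h b) (hlm : l * m ≠ 1) :
      ∑ c, y c * (g c.1 * h c.2) = 0 :=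
    sum_mul_eq_zero_of_stationary_of_eigen (fun c' c => chFlip ε c'.1 c.1 * chFlip ε c'.2 c.2)
      hy (sum_prod_kernel_mul_eigen _ _ hg hh) hlm
  have h₁ := orth spin _ _ _ hspin hone (by nlinarith)
  have h₂ := orth _ spin _ _ hone hspin (by nlinarith)
  have h₁₂ := orth spin spin _ _ hspin hspin (by nlinarith)
  simp only [Fintype.sum_prod_type, Fintype.sum_bool, spin, ↓reduceIte, Bool.false_eq_true,
    mul_one, mul_neg, neg_neg] at h₁ h₂ h₁₂ hsum
  -- Fourier inversion on `Bool × Bool`: `4 * y c` is the spin-weighted sum of the four moments.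
  obtain ⟨_ | _, _ | _⟩ := c <;> linarith

def channelMarginal (x : GEState × Bool → ℝ) (c : Bool × Bool) : ℝ :=
  ∑ m, ∑ a, x ((m, c), a)

theorem sum_channelMarginal (x : GEState × Bool → ℝ) :
    ∑ c, channelMarginal x c = ∑ sa, x sa := by
  rw [Fintype.sum_prod_type x, Fintype.sum_prod_type (fun s => ∑ a, x (s, a))]
  exact sum_comm

theorem sum_GEP_location (ε : ℝ) (c : Bool × Bool) (s : GEState) (a : Bool) :
    ∑ m, GEP ε (m, c) s a = chFlip ε s.2.1 c.1 * chFlip ε s.2.2 c.2 := by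
  simp [GEP]

theorem channelMarginal_stationary {ε : ℝ} {x : GEState × Bool → ℝ} (hx : x ∈ GEX ε)
    (c : Bool × Bool) :
    channelMarginal x c = ∑ c', chFlip ε c'.1 c.1 * chFlip ε c'.2 c.2 * channelMarginal x c' := by
  obtain ⟨-, -, hbal⟩ := hx
  calc channelMarginal x c = ∑ m, ∑ s, ∑ a, GEP ε (m, c) s a * x (s, a) :=
        sum_congr rfl fun m _ => hbal (m, c)
    _ = ∑ s, ∑ a, (∑ m, GEP ε (m, c) s a) * x (s, a) := by
        rw [sum_comm]; simp_rw [sum_mul]; exact sum_congr rfl fun s _ => sum_comm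
    _ = _ := by
        simp_rw [sum_GEP_location, channelMarginal, mul_sum]
        rw [Fintype.sum_prod_type, sum_comm]

/-- For `ε ∈ (0, 1)`, every `x` in the state-action polytope `X(ε)` has uniform channel
marginals: for each fixed channel pair `(c₁, c₂)`, the total state-action frequency of
states with that channel pair equals `1/4`. -/
theorem uniform_channel_marginals (ε : ℝ) (hε : ε ∈ Set.Ioo (0 : ℝ) 1) :
    ∀ x ∈ GEX ε, ∀ c₁ c₂ : Bool,
      (∑ m : Bool, ∑ a : Bool, x ((m, c₁, c₂), a)) = 1 / 4 := by
  intro x hx c₁ c₂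
  refine eq_quarter_of_stationary_chFlip hε (channelMarginal_stationary hx) ?_ (c₁, c₂)
  rw [sum_channelMarginal, hx.2.1]
end
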